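/- Let l, h, n be natural numbers with n ≥ 2, let H be a real l×n matrix, let W₁, W₂ be real l×h matrices, let w : Fin h → ℝ, and let τ > 0. Define the attention pre-scores ξ(H) : Fin n → ℝ by ξ(H)_j = ∑_{k} w_k · tanh((W₁ᵀ·H)_{k,j}) · sigm((W₂ᵀ·H)_{k,j}), the attention scores AS(H) = softmax(ξ(H)/τ), and the aggregated bag-level feature A(H) : Fin l → ℝ by A(H)_i = ∑_{j} H_{i,j} · Ψ(AS(H))_j. Assume the sample standard deviation s(AS(H)) is positive. Then for every permutation σ of Fin n, the margin-aware attention mechanism is permutation invariant: A(H · P_σ) = A(H). -/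

import Mathlib

open Matrix BigOperators

/-- Permutation matrix of `σ`: `(P σ) i j = 1` if `i = σ j`, else `0`. -/
noncomputable def permMat {n : ℕ} (σ : Equiv.Perm (Fin n)) : Matrix (Fin n) (Fin n) ℝ :=
  fun i j => if i = σ j then 1 else 0

/-- Sigmoid function. -/
noncomputable def sigm (x : ℝ) : ℝ := 1 / (1 + Real.exp (-x))

/-- Attention pre-scores `ξ(H)`. -/
noncomputable def xi {l h n : ℕ} (W₁ W₂ : Matrix (Fin l) (Fin h) ℝ) (w : Fin h → ℝ)
    (H : Matrix (Fin l) (Fin n) ℝ) : Fin n → ℝ :=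
  fun j => ∑ k, w k * Real.tanh ((W₁ᵀ * H) k j) * sigm ((W₂ᵀ * H) k j)

/-- Softmax. -/
noncomputable def softmax {n : ℕ} (x : Fin n → ℝ) : Fin n → ℝ :=
  fun j => Real.exp (x j) / ∑ i, Real.exp (x i)

/-- Mean of a vector. -/
noncomputable def meanF {n : ℕ} (a : Fin n → ℝ) : ℝ := (∑ i, a i) / n

/-- Sample standard deviation. -/
noncomputable def sdev {n : ℕ} (a : Fin n → ℝ) : ℝ :=
  Real.sqrt (∑ i, (a i - meanF a) ^ 2 / ((n : ℝ) - 1))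

/-- Standardization `Ψ(a)` (division by zero yields zero). -/
noncomputable def stdize {n : ℕ} (a : Fin n → ℝ) : Fin n → ℝ :=
  fun j => (a j - meanF a) / sdev a

/-- Attention scores `AS(H) = softmax(ξ(H)/τ)`. -/
noncomputable def AS {l h n : ℕ} (W₁ W₂ : Matrix (Fin l) (Fin h) ℝ) (w : Fin h → ℝ) (τ : ℝ)
    (H : Matrix (Fin l) (Fin n) ℝ) : Fin n → ℝ :=
  softmax (fun j => xi W₁ W₂ w H j / τ)

/-- Aggregated bag-level feature `A(H) i = ∑ j, H i j * Ψ(AS(H)) j`. -/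
noncomputable def agg {l h n : ℕ} (W₁ W₂ : Matrix (Fin l) (Fin h) ℝ) (w : Fin h → ℝ) (τ : ℝ)
    (H : Matrix (Fin l) (Fin n) ℝ) : Fin l → ℝ :=
  fun i => ∑ j, H i j * stdize (AS W₁ W₂ w τ H) j

/-!
Right multiplication by `permMat σ` reindexes the columns (the instances) by `σ`. Every stage of
the pipeline is equivariant under such a reindexing: the pre-scores are computed column by column,
while softmax, the mean and the standard deviation only involve sums over all instances, which are
invariant. Hence `Ψ(AS(H · P_σ)) = Ψ(AS(H)) ∘ σ`, and the aggregate `∑ⱼ H_{i,σ j} Ψ(AS(H))_{σ j}`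
is a reindexed version of the original sum.
-/

lemma mul_permMat_apply {m : Type*} {n : ℕ} (M : Matrix m (Fin n) ℝ)
    (σ : Equiv.Perm (Fin n)) (i : m) (j : Fin n) : (M * permMat σ) i j = M i (σ j) := by
  simp [Matrix.mul_apply, permMat]

section PermutationEquivariance

variable {n : ℕ} (σ : Equiv.Perm (Fin n))

lemma softmax_comp_perm (x : Fin n → ℝ) : softmax (x ∘ σ) = softmax x ∘ σ := by
  funext j
  simp only [softmax, Function.comp_apply, Equiv.sum_comp σ (fun i => Real.exp (x i))]

lemma meanF_comp_perm (a : Fin n → ℝ) : meanF (a ∘ σ) = meanF a := by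
  simp only [meanF, Function.comp_apply, Equiv.sum_comp σ a]

lemma sdev_comp_perm (a : Fin n → ℝ) : sdev (a ∘ σ) = sdev a := by
  simp only [sdev, meanF_comp_perm, Function.comp_apply,
    Equiv.sum_comp σ (fun i => (a i - meanF a) ^ 2 / ((n : ℝ) - 1))]

lemma stdize_comp_perm (a : Fin n → ℝ) : stdize (a ∘ σ) = stdize a ∘ σ := by
  funext j
  simp only [stdize, meanF_comp_perm, sdev_comp_perm, Function.comp_apply]

variable {l h : ℕ} (W₁ W₂ : Matrix (Fin l) (Fin h) ℝ) (w : Fin h → ℝ) (τ : ℝ)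
  (H : Matrix (Fin l) (Fin n) ℝ)

lemma xi_mul_permMat : xi W₁ W₂ w (H * permMat σ) = xi W₁ W₂ w H ∘ σ := by
  funext j
  simp only [xi, ← Matrix.mul_assoc, mul_permMat_apply, Function.comp_apply]

lemma AS_mul_permMat : AS W₁ W₂ w τ (H * permMat σ) = AS W₁ W₂ w τ H ∘ σ := by
  rw [AS, xi_mul_permMat, AS, ← softmax_comp_perm]
  rfl

end PermutationEquivariance

theorem margin_aware_attention_permutation_invariant_general {l h n : ℕ}
    (H : Matrix (Fin l) (Fin n) ℝ) (W₁ W₂ : Matrix (Fin l) (Fin h) ℝ) (w : Fin h → ℝ)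
    (τ : ℝ) (σ : Equiv.Perm (Fin n)) :
    agg W₁ W₂ w τ (H * permMat σ) = agg W₁ W₂ w τ H := by
  funext i
  simp only [agg, mul_permMat_apply, AS_mul_permMat, stdize_comp_perm, Function.comp_apply]
  exact Equiv.sum_comp σ (fun j => H i j * stdize (AS W₁ W₂ w τ H) j)

/-- The margin-aware attention mechanism is permutation invariant. -/
theorem margin_aware_attention_permutation_invariant {l h n : ℕ} (hn : 2 ≤ n)
    (H : Matrix (Fin l) (Fin n) ℝ) (W₁ W₂ : Matrix (Fin l) (Fin h) ℝ) (w : Fin h → ℝ)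
    (τ : ℝ) (hτ : 0 < τ) (hs : 0 < sdev (AS W₁ W₂ w τ H)) (σ : Equiv.Perm (Fin n)) :
    agg W₁ W₂ w τ (H * permMat σ) = agg W₁ W₂ w τ H :=
  margin_aware_attention_permutation_invariant_general H W₁ W₂ w τ σ
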